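/- For x ∈ ℓ_∞^K(ℓ_2^N) and y ∈ ℓ_2^M, the rank-one tensor x ⊗ y (viewed as the matrix y x^* or its transpose) satisfies ‖x ⊗ y‖_$ = ‖x‖_{ℓ_∞^K(ℓ_2^N)} · ‖y‖_2, where ‖·‖_$ is the factorization norm inf_{UV^* = ·} ‖U‖_F ‖V^*‖_{∞,F}. -/
import Mathlib


open scoped BigOperators

/-- Frobenius norm of a real matrix. -/
noncomputable def frob {m n : ℕ} (A : Matrix (Fin m) (Fin n) ℝ) : ℝ :=
  Real.sqrt (∑ i, ∑ j, (A i j) ^ 2)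

/-- Index of the `j`th column of the `k`th block inside `Fin (N * K)`. -/
def blkIdx {N K : ℕ} (k : Fin K) (j : Fin N) : Fin (N * K) :=
  ⟨j.1 + N * k.1, by
    have hj := j.isLt
    have hk := k.isLt
    calc j.1 + N * k.1 < N + N * k.1 := by omega
      _ = N * (k.1 + 1) := by ring
      _ ≤ N * K := Nat.mul_le_mul_left N hk⟩

/-- The `k`th `M × N` block of an `M × NK` matrix. -/
noncomputable def blk {M N K : ℕ} (X : Matrix (Fin M) (Fin (N * K)) ℝ) (k : Fin K) :
    Matrix (Fin M) (Fin N) ℝ :=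
  Matrix.of fun i j => X i (blkIdx k j)

/-- Maximum-block-Frobenius norm `‖X‖_{∞,F} = max_k ‖X_k‖_F`. -/
noncomputable def bnorm {M N K : ℕ} (X : Matrix (Fin M) (Fin (N * K)) ℝ) : ℝ :=
  ⨆ k : Fin K, frob (blk X k)

/-- The `$`-norm: `inf_{X = U Vᵀ} ‖U‖_F ‖Vᵀ‖_{∞,F}` over factorizations of arbitrary
inner dimension. -/
noncomputable def dollar {M N K : ℕ} (X : Matrix (Fin M) (Fin (N * K)) ℝ) : ℝ :=
  sInf {t : ℝ | ∃ (r : ℕ) (U : Matrix (Fin M) (Fin r) ℝ)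
    (V : Matrix (Fin (N * K)) (Fin r) ℝ),
    X = U * V.transpose ∧ t = frob U * bnorm V.transpose}

lemma frob_nonneg {m n : ℕ} (A : Matrix (Fin m) (Fin n) ℝ) : 0 ≤ frob A :=
  Real.sqrt_nonneg _

lemma bnorm_nonneg {M N K : ℕ} (X : Matrix (Fin M) (Fin (N * K)) ℝ) : 0 ≤ bnorm X :=
  Real.iSup_nonneg fun _ => frob_nonneg _

lemma frob_mul_le {m r n : ℕ} (A : Matrix (Fin m) (Fin r) ℝ) (B : Matrix (Fin r) (Fin n) ℝ) :
    frob (A * B) ≤ frob A * frob B := by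
  unfold frob
  rw [← Real.sqrt_mul (by positivity)]
  apply Real.sqrt_le_sqrt
  have h1 : ∑ i, ∑ j, ((A * B) i j) ^ 2 ≤
      ∑ i : Fin m, ∑ j : Fin n, (∑ l, (A i l) ^ 2) * (∑ l, (B l j) ^ 2) := by
    apply Finset.sum_le_sum; intro i _
    apply Finset.sum_le_sum; intro j _
    simpa [Matrix.mul_apply] using
      Finset.sum_mul_sq_le_sq_mul_sq Finset.univ (fun l => A i l) (fun l => B l j)
  refine h1.trans_eq ?_
  rw [← Finset.sum_mul_sum]
  congr 1
  exact Finset.sum_comm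

lemma blk_mul {M N K r : ℕ} (U : Matrix (Fin M) (Fin r) ℝ)
    (W : Matrix (Fin r) (Fin (N * K)) ℝ) (k : Fin K) :
    blk (U * W) k = U * blk W k := by
  ext i j
  simp [blk, Matrix.mul_apply]

lemma frob_rank_one {m n : ℕ} (y : Fin m → ℝ) (x : Fin n → ℝ) :
    frob (Matrix.of fun i j => y i * x j) =
      Real.sqrt (∑ i, y i ^ 2) * Real.sqrt (∑ j, x j ^ 2) := by
  unfold frob
  rw [← Real.sqrt_mul (by positivity)]
  congr 1
  rw [Finset.sum_mul_sum]
  simp [mul_pow]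

lemma frob_blk_le_bnorm {M N K : ℕ} (X : Matrix (Fin M) (Fin (N * K)) ℝ) (k : Fin K) :
    frob (blk X k) ≤ bnorm X :=
  le_ciSup (f := fun k => frob (blk X k)) (Set.Finite.bddAbove (Set.finite_range _)) k

/-- for a rank-one tensor `x ⊗ y` (the matrix `(i,j) ↦ y i * x j`),
`‖x ⊗ y‖_$ = ‖x‖_{ℓ_∞^K(ℓ_2^N)} · ‖y‖_2`. -/
theorem stmt6 (M N K : ℕ) (x : Fin (N * K) → ℝ) (y : Fin M → ℝ) :
    dollar (Matrix.of fun (i : Fin M) (j : Fin (N * K)) => y i * x j) =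
      (⨆ k : Fin K, Real.sqrt (∑ j : Fin N, x (blkIdx k j) ^ 2)) *
        Real.sqrt (∑ i, y i ^ 2) := by
  set X : Matrix (Fin M) (Fin (N * K)) ℝ :=
    Matrix.of fun (i : Fin M) (j : Fin (N * K)) => y i * x j with hX
  set A : ℝ := ⨆ k : Fin K, Real.sqrt (∑ j : Fin N, x (blkIdx k j) ^ 2) with hA
  set B : ℝ := Real.sqrt (∑ i, y i ^ 2) with hB
  have hBnn : 0 ≤ B := Real.sqrt_nonneg _
  have hAnn : 0 ≤ A := Real.iSup_nonneg fun _ => Real.sqrt_nonneg _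
  set S : Set ℝ := {t : ℝ | ∃ (r : ℕ) (U : Matrix (Fin M) (Fin r) ℝ)
    (V : Matrix (Fin (N * K)) (Fin r) ℝ),
    X = U * V.transpose ∧ t = frob U * bnorm V.transpose} with hS
  -- membership of A * B in S
  have hmem : A * B ∈ S := by
    refine ⟨1, Matrix.of fun i _ => y i, Matrix.of fun j _ => x j, ?_, ?_⟩
    · ext i j
      simp [hX, Matrix.mul_apply]
    · have hU : frob (Matrix.of fun (i : Fin M) (_ : Fin 1) => y i) = B := by
        simp [frob, hB]
      have hV : bnorm (Matrix.of fun (j : Fin (N * K)) (_ : Fin 1) => x j).transpose = A := by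
        unfold bnorm
        rw [hA]
        congr 1
        funext k
        simp [frob, blk]
      rw [hU, hV, mul_comm]
  -- every element of S is an upper bound
  have hlb : ∀ t ∈ S, A * B ≤ t := by
    rintro t ⟨r, U, V, hfact, rfl⟩
    have htnn : 0 ≤ frob U * bnorm V.transpose :=
      mul_nonneg (frob_nonneg _) (bnorm_nonneg _)
    have hk : ∀ k : Fin K,
        Real.sqrt (∑ j : Fin N, x (blkIdx k j) ^ 2) * B ≤ frob U * bnorm V.transpose := by
      intro k
      have h1 : frob (blk X k) ≤ frob U * bnorm V.transpose := by
        rw [hfact, blk_mul]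
        exact (frob_mul_le _ _).trans
          (mul_le_mul_of_nonneg_left (frob_blk_le_bnorm _ k) (frob_nonneg _))
      have h2 : frob (blk X k) =
          Real.sqrt (∑ j : Fin N, x (blkIdx k j) ^ 2) * B := by
        have : blk X k = Matrix.of fun i j => y i * x (blkIdx k j) := rfl
        rw [this, frob_rank_one, mul_comm, hB]
      rwa [h2] at h1
    rw [hA, Real.iSup_mul_of_nonneg hBnn]
    exact Real.iSup_le hk htnn
  have hbdd : BddBelow S := ⟨0, by
    rintro t ⟨r, U, V, hfact, rfl⟩
    exact mul_nonneg (frob_nonneg _) (bnorm_nonneg _)⟩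
  exact le_antisymm (csInf_le hbdd hmem) (le_csInf ⟨A * B, hmem⟩ hlb)
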